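/- For every integer d ≥ 2 and all reals γ > 0, κ > 0 and α > 0, the integral ∫₀^∞ exp( −γ κ^{−d/2} G(√κ · u^{1/α}) ) du is finite. -/

import Mathlib

open MeasureTheory Real

/-- `ω_k`, the surface area of the (k−1)-dimensional Euclidean unit sphere. -/
noncomputable def omegaS (k : ℕ) : ℝ := 2 * Real.pi ^ ((k : ℝ) / 2) / Real.Gamma ((k : ℝ) / 2)

/-- `κ_k`, the volume of the k-dimensional Euclidean unit ball. -/
noncomputable def kappaV (k : ℕ) : ℝ := omegaS k / k

/-- `G(u) := κ_{d−1} ∫₀^u (2 e^{−t} (cosh u − cosh t))^{(d−1)/2} dt`. -/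
noncomputable def Gfun (d : ℕ) (u : ℝ) : ℝ :=
  kappaV (d - 1) *
    ∫ t in (0:ℝ)..u, (2 * Real.exp (-t) * (Real.cosh u - Real.cosh t)) ^ (((d : ℝ) - 1) / 2)

/-! For `t ≥ 0` the base `2 e^{−t} (cosh v − cosh t)` is at least `e^{v−t} − 2`, hence at least `1`
on `[0, v − 2]`, so `G` grows at least linearly: `G(v) ≥ κ_{d−1} (v − 2)`. The integrand is therefore
dominated by a multiple of `exp(−c u^{1/α})`, whose integral over `(0, ∞)` is a Gamma integral. -/

open Set intervalIntegral

lemma omegaS_pos {k : ℕ} (hk : 0 < k) : 0 < omegaS k :=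
  div_pos (by positivity) (Gamma_pos_of_pos (by positivity))

lemma kappaV_pos {k : ℕ} (hk : 0 < k) : 0 < kappaV k :=
  div_pos (omegaS_pos hk) (by positivity)

noncomputable def gKernel (p v t : ℝ) : ℝ := (2 * exp (-t) * (cosh v - cosh t)) ^ p

lemma Gfun_eq (d : ℕ) (v : ℝ) :
    Gfun d v = kappaV (d - 1) * ∫ t in (0 : ℝ)..v, gKernel (((d : ℝ) - 1) / 2) v t :=
  rfl

lemma exp_sub_sub_two_le_two_mul_exp_neg_mul_cosh_sub_cosh {t : ℝ} (ht : 0 ≤ t) (v : ℝ) :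
    exp (v - t) - 2 ≤ 2 * exp (-t) * (cosh v - cosh t) := by
  have hinv : exp (-t) * exp t = 1 := by rw [← exp_add, neg_add_cancel, exp_zero]
  have hle : exp (-t) ≤ 1 := exp_le_one_iff.2 (by linarith)
  have hpos := exp_pos (-t)
  rw [cosh_eq, cosh_eq, sub_eq_add_neg v, exp_add, mul_comm (exp v)]
  nlinarith [exp_pos (-v)]

lemma continuous_gKernel {p : ℝ} (hp : 0 ≤ p) :
    Continuous fun x : ℝ × ℝ => gKernel p x.1 x.2 :=
  Continuous.rpow_const (by fun_prop) fun _ => Or.inr hp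

lemma gKernel_nonneg (p : ℝ) {v t : ℝ} (ht : t ∈ Icc 0 v) : 0 ≤ gKernel p v t := by
  have hcosh : cosh t ≤ cosh v := by
    rw [cosh_le_cosh, abs_of_nonneg ht.1, abs_of_nonneg (ht.1.trans ht.2)]
    exact ht.2
  exact rpow_nonneg (mul_nonneg (by positivity) (sub_nonneg.2 hcosh)) p

lemma one_le_gKernel {p : ℝ} (hp : 0 ≤ p) {v t : ℝ} (ht : t ∈ Icc 0 (v - 2)) :
    1 ≤ gKernel p v t := by
  refine one_le_rpow ?_ hp
  linarith [exp_sub_sub_two_le_two_mul_exp_neg_mul_cosh_sub_cosh ht.1 v, add_one_le_exp (v - t),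
    ht.2]

lemma sub_two_le_integral_gKernel {p : ℝ} (hp : 0 ≤ p) {v : ℝ} (hv : 0 ≤ v) :
    v - 2 ≤ ∫ t in (0 : ℝ)..v, gKernel p v t := by
  have hint : ∀ a b : ℝ, IntervalIntegrable (gKernel p v) volume a b := fun a b =>
    ((continuous_gKernel hp).comp (Continuous.prodMk_right v)).intervalIntegrable a b
  rcases le_or_gt v 2 with hv2 | hv2
  · linarith [integral_nonneg (μ := volume) hv fun t ht => gKernel_nonneg p ht]
  rw [← integral_add_adjacent_intervals (hint 0 (v - 2)) (hint (v - 2) v)]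
  have hhead : v - 2 ≤ ∫ t in (0 : ℝ)..(v - 2), gKernel p v t := by
    simpa using integral_mono_on (by linarith) intervalIntegrable_const (hint 0 (v - 2))
      fun t ht => one_le_gKernel hp ht
  have htail : 0 ≤ ∫ t in (v - 2)..v, gKernel p v t :=
    integral_nonneg (by linarith) fun t ht => gKernel_nonneg p ⟨by linarith [ht.1], ht.2⟩
  linarith

lemma half_sub_one_nonneg {d : ℕ} (hd : 1 ≤ d) : (0 : ℝ) ≤ ((d : ℝ) - 1) / 2 :=
  div_nonneg (sub_nonneg.2 (by exact_mod_cast hd)) zero_le_two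

lemma continuous_Gfun {d : ℕ} (hd : 1 ≤ d) : Continuous (Gfun d) :=
  continuous_const.mul <| continuous_parametric_intervalIntegral_of_continuous
    (continuous_gKernel (half_sub_one_nonneg hd)) continuous_id

lemma kappaV_mul_sub_two_le_Gfun {d : ℕ} (hd : 2 ≤ d) {v : ℝ} (hv : 0 ≤ v) :
    kappaV (d - 1) * (v - 2) ≤ Gfun d v := by
  rw [Gfun_eq]
  exact mul_le_mul_of_nonneg_left
    (sub_two_le_integral_gKernel (half_sub_one_nonneg (by omega)) hv) (kappaV_pos (by omega)).le

lemma integrableOn_Ioi_exp_neg_comp_mul_rpow {g : ℝ → ℝ} (hg : Measurable g) {a r c q : ℝ}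
    (ha : 0 < a) (hc : 0 < c) (hq : 0 < q) (hlow : ∀ v, 0 ≤ v → a * (v - r) ≤ g v) :
    IntegrableOn (fun u => exp (-g (c * u ^ q))) (Ioi 0) := by
  have hdom : IntegrableOn (fun u : ℝ => exp (a * r) * (u ^ (0 : ℝ) * exp (-(a * c) * u ^ q)))
      (Ioi 0) :=
    (integrableOn_rpow_mul_exp_neg_mul_rpow neg_one_lt_zero hq (mul_pos ha hc)).const_mul _
  have hmeas : Measurable fun u : ℝ => exp (-g (c * u ^ q)) :=
    (hg.comp (measurable_const.mul (measurable_id.pow_const q))).neg.exp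
  refine hdom.mono' hmeas.aestronglyMeasurable ?_
  filter_upwards [ae_restrict_mem measurableSet_Ioi] with u hu
  have hv : 0 ≤ c * u ^ q := mul_nonneg hc.le (rpow_nonneg (le_of_lt hu) q)
  rw [norm_of_nonneg (exp_pos _).le, rpow_zero, one_mul, ← exp_add, exp_le_exp]
  linarith [hlow _ hv]

/-- for every integer `d ≥ 2` and all reals `γ, κ, α > 0`, the integral
`∫₀^∞ exp(−γ κ^{−d/2} G(√κ u^{1/α})) du` is finite. -/
theorem stmt8 (d : ℕ) (hd : 2 ≤ d) (γ κ α : ℝ) (hγ : 0 < γ) (hκ : 0 < κ) (hα : 0 < α) :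
    IntegrableOn
      (fun u : ℝ =>
        Real.exp (-γ * κ ^ (-(d : ℝ) / 2) * Gfun d (Real.sqrt κ * u ^ (1 / α))))
      (Set.Ioi (0 : ℝ)) := by
  have hscale : 0 < γ * κ ^ (-(d : ℝ) / 2) := mul_pos hγ (rpow_pos_of_pos hκ _)
  have hlow (v : ℝ) (hv : 0 ≤ v) :
      γ * κ ^ (-(d : ℝ) / 2) * kappaV (d - 1) * (v - 2) ≤ γ * κ ^ (-(d : ℝ) / 2) * Gfun d v := by
    rw [mul_assoc]
    exact mul_le_mul_of_nonneg_left (kappaV_mul_sub_two_le_Gfun hd hv) hscale.le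
  have hmeas : Measurable fun v => γ * κ ^ (-(d : ℝ) / 2) * Gfun d v :=
    measurable_const.mul (continuous_Gfun (by omega)).measurable
  simpa only [neg_mul] using integrableOn_Ioi_exp_neg_comp_mul_rpow hmeas
    (mul_pos hscale (kappaV_pos (by omega))) (sqrt_pos.2 hκ) (one_div_pos.2 hα) hlow
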